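/- arXiv:1810.05593 — 6 statements merged into one kernel-verified Lean document; each statement's English description precedes it below -/
import Mathlib

section
/- (1-element stochastic separation) Let x_1, ..., x_M, x_{M+1} be i.i.d. random vectors in R^n with independent components in [-1,1], mean zero, and R_0^2 = Σ_j σ_j^2 > 0. Fix 0 < ε < 1 and define h(x) = ⟨x/R_0, x_{M+1}/R_0⟩ - 1 + ε. Then P(h(x_{M+1}) ≥ 0 and h(x_i) < 0 for all i = 1,...,M) ≥ 1 - exp(-2 R_0^4 ε^2 / n) - M exp(-R_0^4 (1-ε)^2 / (2n)). -/
/-!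
The separation fails only if `‖x_{M+1}‖² < (1 - ε) R₀²` or `⟨x_i, x_{M+1}⟩ ≥ (1 - ε) R₀²` for
some `i ≤ M`. The first event is a Hoeffding deviation of the sum of the independent variables
`σ_j² - x_{M+1,j}² ∈ [σ_j² - 1, σ_j²]`. For the second, once `x_i = u` is fixed the inner product
is a sum of independent mean-zero terms `u_j x_{M+1,j} ∈ [-1, 1]`, hence sub-Gaussian with
parameter `n`; since `x_i` and `x_{M+1}` are independent, this bound survives integrating over
`u` (Fubini). A union bound finishes the proof.
-/

open MeasureTheory ProbabilityTheory Real Set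
open scoped NNReal

lemma one_sub_measureReal_sub_sum_le_of_compl_subset {Ω ι : Type*} [MeasurableSpace Ω] [Fintype ι]
    {P : Measure Ω} [IsProbabilityMeasure P] {s t : Set Ω} {u : ι → Set Ω}
    (h : sᶜ ⊆ t ∪ ⋃ i, u i) :
    1 - P.real t - ∑ i, P.real (u i) ≤ P.real s := by
  have hcover : (univ : Set Ω) ⊆ s ∪ (t ∪ ⋃ i, u i) := fun ω _ => by
    by_cases hω : ω ∈ s
    · exact Or.inl hω
    · exact Or.inr (h hω)
  have := (probReal_univ (μ := P)).symm.le.trans (measureReal_mono hcover)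
  linarith [measureReal_union_le (μ := P) s (t ∪ ⋃ i, u i),
    measureReal_union_le (μ := P) t (⋃ i, u i), measureReal_iUnion_fintype_le (μ := P) u]

lemma mul_mem_Icc_neg_one_one {a b : ℝ} (ha : a ∈ Icc (-1 : ℝ) 1) (hb : b ∈ Icc (-1 : ℝ) 1) :
    a * b ∈ Icc (-1 : ℝ) 1 :=
  abs_le.1 ((abs_mul a b).trans_le (mul_le_one₀ (abs_le.2 ha) (abs_nonneg b) (abs_le.2 hb)))

namespace ProbabilityTheory

variable {Ω : Type*} [MeasurableSpace Ω] {P : Measure Ω} [IsProbabilityMeasure P]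

lemma hasSubgaussianMGF_sum_of_mem_Icc {ι : Type*} [Fintype ι] {Y : ι → Ω → ℝ}
    (hindep : iIndepFun Y P) (hmeas : ∀ j, AEMeasurable (Y j) P) {a : ι → ℝ} {d : ℝ≥0}
    (hbd : ∀ j, ∀ᵐ ω ∂P, Y j ω ∈ Icc (a j) (a j + d)) (hmean : ∀ j, P[Y j] = 0) :
    HasSubgaussianMGF (fun ω => ∑ j, Y j ω) (Fintype.card ι * (d / 2) ^ 2) P := by
  have := HasSubgaussianMGF.sum_of_iIndepFun hindep (s := Finset.univ)
    fun j _ => hasSubgaussianMGF_of_mem_Icc_of_integral_eq_zero (hmeas j) (hbd j) (hmean j)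
  simpa using this

lemma hasSubgaussianMGF_of_indepFun {E F : Type*} [MeasurableSpace E] [MeasurableSpace F]
    {U : Ω → E} {V : Ω → F} (hU : Measurable U) (hV : Measurable V) (hUV : IndepFun U V P)
    {f : E → F → ℝ} (hf : Measurable (Function.uncurry f)) {c : ℝ≥0}
    (hint : ∀ t, Integrable (fun ω => exp (t * f (U ω) (V ω))) P)
    (hfrozen : ∀ ω', HasSubgaussianMGF (fun ω => f (U ω') (V ω)) c P) :
    HasSubgaussianMGF (fun ω => f (U ω) (V ω)) c P where
  integrable_exp_mul := hint
  mgf_le t := by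
    set g : E × F → ℝ := fun q => exp (t * f q.1 q.2)
    have hg : Measurable g := (hf.const_mul t).exp
    have hlaw : P.map (fun ω => (U ω, V ω)) = (P.map U).prod (P.map V) :=
      (indepFun_iff_map_prod_eq_prod_map_map hU.aemeasurable hV.aemeasurable).1 hUV
    have hUV' : AEMeasurable (fun ω => (U ω, V ω)) P := (hU.prodMk hV).aemeasurable
    have hgint : Integrable g ((P.map U).prod (P.map V)) := by
      rw [← hlaw, integrable_map_measure hg.aestronglyMeasurable hUV']
      exact hint t
    have hinner : ∀ ω', ∫ v, g (U ω', v) ∂(P.map V) = mgf (fun ω => f (U ω') (V ω)) P t :=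
      fun ω' => integral_map hV.aemeasurable (hg.comp measurable_prodMk_left).aestronglyMeasurable
    calc mgf (fun ω => f (U ω) (V ω)) P t
        = ∫ q, g q ∂((P.map U).prod (P.map V)) := by
          rw [← hlaw, integral_map hUV' hg.aestronglyMeasurable]
          rfl
      _ = ∫ ω', ∫ v, g (U ω', v) ∂(P.map V) ∂P := by
          rw [integral_prod g hgint,
            integral_map hU.aemeasurable hgint.integral_prod_left.aestronglyMeasurable]
      _ ≤ ∫ _, exp (c * t ^ 2 / 2) ∂P := by
          refine integral_mono_of_nonneg (ae_of_all _ fun ω' => ?_) (integrable_const _)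
            (ae_of_all _ fun ω' => ?_)
          · exact integral_nonneg fun v => (exp_pos _).le
          · exact (hinner ω').trans_le ((hfrozen ω').mgf_le t)
      _ = exp (c * t ^ 2 / 2) := by simp

lemma hasSubgaussianMGF_sum_sub_sq {ι : Type*} [Fintype ι] {X : ι → Ω → ℝ}
    (hindep : iIndepFun X P) (hmeas : ∀ j, Measurable (X j))
    (hbd : ∀ j ω, X j ω ∈ Icc (-1 : ℝ) 1) {v : ι → ℝ} (hvar : ∀ j, ∫ ω, X j ω ^ 2 ∂P = v j) :
    HasSubgaussianMGF (fun ω => ∑ j, (v j - X j ω ^ 2)) (Fintype.card ι / 4) P := by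
  have hsq : ∀ j ω, X j ω ^ 2 ∈ Icc (0 : ℝ) 1 := fun j ω =>
    ⟨sq_nonneg _, sq_le_one_iff_abs_le_one _ |>.2 (abs_le.2 (hbd j ω))⟩
  have h := hasSubgaussianMGF_sum_of_mem_Icc (P := P) (a := fun j => v j - 1) (d := 1)
    (hindep.comp (fun j x => v j - x ^ 2) fun j => by fun_prop)
    (fun j => ((hmeas j).pow_const 2).const_sub _ |>.aemeasurable)
    (fun j => ae_of_all _ fun ω => by
      obtain ⟨h₀, h₁⟩ := hsq j ω
      constructor <;> simp <;> linarith)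
    (fun j => by
      have hint : Integrable (fun ω => X j ω ^ 2) P :=
        .of_mem_Icc 0 1 ((hmeas j).pow_const 2).aemeasurable (ae_of_all _ (hsq j))
      simp only [Function.comp_def]
      rw [integral_sub (integrable_const _) hint, hvar]
      simp)
  convert h using 2
  norm_num [div_pow]
  ring

lemma hasSubgaussianMGF_sum_mul_of_indepFun {ι : Type*} [Fintype ι] {U V : Ω → ι → ℝ}
    (hU : Measurable U) (hV : Measurable V) (hUV : IndepFun U V P)
    (hVindep : iIndepFun (fun j ω => V ω j) P)
    (hUbd : ∀ ω j, U ω j ∈ Icc (-1 : ℝ) 1) (hVbd : ∀ ω j, V ω j ∈ Icc (-1 : ℝ) 1)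
    (hVmean : ∀ j, ∫ ω, V ω j ∂P = 0) :
    HasSubgaussianMGF (fun ω => ∑ j, U ω j * V ω j) (Fintype.card ι) P := by
  have hterm : ∀ ω ω' j, U ω' j * V ω j ∈ Icc (-1 : ℝ) 1 := fun ω ω' j =>
    mul_mem_Icc_neg_one_one (hUbd ω' j) (hVbd ω j)
  refine hasSubgaussianMGF_of_indepFun (f := fun u w => ∑ j, u j * w j) hU hV hUV
    (by fun_prop) (fun t => integrable_exp_mul_of_mem_Icc (a := -Fintype.card ι)
      (b := Fintype.card ι) (by fun_prop) (ae_of_all _ fun ω => ?_)) fun ω' => ?_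
  · refine abs_le.1 ?_
    calc |∑ j, U ω j * V ω j| ≤ ∑ j, |U ω j * V ω j| := Finset.abs_sum_le_sum_abs _ _
      _ ≤ ∑ _j : ι, (1 : ℝ) := Finset.sum_le_sum fun j _ => abs_le.2 (hterm ω ω j)
      _ = Fintype.card ι := by simp
  · have h := hasSubgaussianMGF_sum_of_mem_Icc (P := P) (a := fun _ => -1) (d := 2)
      (hVindep.comp (fun j x => U ω' j * x) fun j => by fun_prop)
      (fun j => (hV.eval.const_mul _).aemeasurable)
      (fun j => ae_of_all _ fun ω => by norm_num; exact hterm ω ω' j)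
      (fun j => by simp [integral_const_mul, hVmean])
    simpa using h

end ProbabilityTheory

theorem one_element_separation_general
    {Ω : Type*} [MeasurableSpace Ω] (P : Measure Ω) [IsProbabilityMeasure P]
    (n M : ℕ) (x : Fin (M + 1) → Ω → (Fin n → ℝ))
    (hmeas : ∀ i, Measurable (x i))
    (hindep : iIndepFun x P)
    (hcompindep : ∀ i, iIndepFun (fun j ω => x i ω j) P)
    (hbound : ∀ i j ω, x i ω j ∈ Set.Icc (-1 : ℝ) 1)
    (hmean : ∀ i j, ∫ ω, x i ω j ∂P = 0)
    (σ : Fin n → ℝ) (hvar : ∀ i j, ∫ ω, (x i ω j) ^ 2 ∂P = (σ j) ^ 2)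
    (R0 : ℝ) (hR0 : 0 < R0) (hR0sq : R0 ^ 2 = ∑ j, (σ j) ^ 2)
    (ε : ℝ) (hε : 0 < ε) (hε1 : ε < 1) :
    1 - Real.exp (-(2 * R0 ^ 4 * ε ^ 2 / n))
      - M * Real.exp (-(R0 ^ 4 * (1 - ε) ^ 2 / (2 * n))) ≤
    (P {ω | 0 ≤ (∑ j, x (Fin.last M) ω j * x (Fin.last M) ω j) / R0 ^ 2 - 1 + ε ∧
        ∀ i : Fin M,
          (∑ j, x i.castSucc ω j * x (Fin.last M) ω j) / R0 ^ 2 - 1 + ε < 0}).toReal := by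
  have hR0sq_pos : 0 < R0 ^ 2 := by positivity
  have hnorm := (hasSubgaussianMGF_sum_sub_sq (hcompindep (Fin.last M))
    (fun j => (hmeas _).eval) (fun j ω => hbound _ j ω) (hvar _)).measure_ge_le
    (ε := ε * R0 ^ 2) (by positivity)
  have hinner (i : Fin M) := (hasSubgaussianMGF_sum_mul_of_indepFun (hmeas i.castSucc)
    (hmeas (Fin.last M)) (hindep.indepFun (Fin.castSucc_lt_last i).ne) (hcompindep _)
    (fun ω j => hbound _ j ω) (fun ω j => hbound _ j ω) (hmean _)).measure_ge_le
    (ε := (1 - ε) * R0 ^ 2) (mul_nonneg (by linarith) hR0sq_pos.le)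
  refine le_trans ?_ (one_sub_measureReal_sub_sum_le_of_compl_subset
    (t := {ω | ε * R0 ^ 2 ≤ ∑ j, (σ j ^ 2 - x (Fin.last M) ω j ^ 2)})
    (u := fun i : Fin M => {ω | (1 - ε) * R0 ^ 2 ≤ ∑ j, x i.castSucc ω j * x (Fin.last M) ω j})
    fun ω hω => ?_)
  · have hsum := Finset.sum_le_sum fun i (_ : i ∈ Finset.univ) => hinner i
    simp only [Finset.sum_const, Finset.card_univ, Fintype.card_fin, nsmul_eq_mul] at hsum
    refine sub_le_sub (sub_le_sub_left (hnorm.trans_eq ?_) _) (hsum.trans_eq ?_) <;>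
      push_cast [Fintype.card_fin] <;> ring_nf
  rw [mem_compl_iff, mem_ofPred_eq, not_and_or, not_le, not_forall] at hω
  rcases hω with hω | ⟨i, hω⟩
  · left
    have hlt : ∑ j, x (Fin.last M) ω j * x (Fin.last M) ω j < (1 - ε) * R0 ^ 2 :=
      (div_lt_iff₀ hR0sq_pos).1 (by linarith)
    simp only [mem_ofPred_eq, Finset.sum_sub_distrib, ← hR0sq, sq (x _ _ _)]
    linarith
  · right
    exact mem_iUnion.2 ⟨i, (le_div_iff₀ hR0sq_pos).1 (by linarith [not_lt.1 hω])⟩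

/-- 1-element stochastic separation: for i.i.d. product-distribution vectors
`x 0, …, x M`, the hyperplane `h(v) = ⟨v/R₀, x M/R₀⟩ - 1 + ε` separates `x M`
from the other points with probability at least
`1 - exp(-2R₀⁴ε²/n) - M exp(-R₀⁴(1-ε)²/(2n))`. -/
theorem one_element_separation
    {Ω : Type*} [MeasurableSpace Ω] (P : Measure Ω) [IsProbabilityMeasure P]
    (n M : ℕ) (hn : 0 < n) (x : Fin (M + 1) → Ω → (Fin n → ℝ))
    (hmeas : ∀ i, Measurable (x i))
    (hindep : iIndepFun x P)
    (hident : ∀ i i', Measure.map (x i) P = Measure.map (x i') P)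
    (hcompindep : ∀ i, iIndepFun (fun j ω => x i ω j) P)
    (hbound : ∀ i j ω, x i ω j ∈ Set.Icc (-1 : ℝ) 1)
    (hmean : ∀ i j, ∫ ω, x i ω j ∂P = 0)
    (σ : Fin n → ℝ) (hvar : ∀ i j, ∫ ω, (x i ω j) ^ 2 ∂P = (σ j) ^ 2)
    (R0 : ℝ) (hR0 : 0 < R0) (hR0sq : R0 ^ 2 = ∑ j, (σ j) ^ 2)
    (ε : ℝ) (hε : 0 < ε) (hε1 : ε < 1) :
    1 - Real.exp (-(2 * R0 ^ 4 * ε ^ 2 / n))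
      - M * Real.exp (-(R0 ^ 4 * (1 - ε) ^ 2 / (2 * n))) ≤
    (P {ω | 0 ≤ (∑ j, x (Fin.last M) ω j * x (Fin.last M) ω j) / R0 ^ 2 - 1 + ε ∧
        ∀ i : Fin M,
          (∑ j, x i.castSucc ω j * x (Fin.last M) ω j) / R0 ^ 2 - 1 + ε < 0}).toReal :=
  one_element_separation_general P n M x hmeas hindep hcompindep hbound hmean σ hvar R0 hR0 hR0sq ε
    hε hε1
end

section
/- (k-element separation without correlation assumption) Under the same i.i.d. product-distribution assumptions, pick δ > 0 and 0 < ε < 1 with 1 - ε - δ(k-1) > 0, set x̄ = (1/k) Σ_{i=1}^k x_{M+i} and h(x) = ⟨x/R_0, x̄/R_0⟩ - (1 - ε - δ(k-1))/k. Then P(h(x_j) ≥ 0 for all j in the k-element set and h(x_i) < 0 for all i in the M-element set) ≥ 1 - k exp(-2 R_0^4 ε^2 / n) - (k(k-1)/2) exp(-R_0^4 δ^2 / (2n)) - M exp(-R_0^4 (1-ε-δ(k-1))^2 / (2 k^2 n)). -/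
/-! Outside three families of bad events the separation holds deterministically: if every
`x_{M+j}` has squared norm above `(1 - ε) R₀²` and every pair `x_{M+i}, x_{M+j}` has inner
product above `-δ R₀²`, then `⟨x_{M+j}, x̄⟩ ≥ (1 - ε - δ (k - 1)) R₀² / k`, and the remaining bad
events say that some `⟨x_i, x̄⟩` reaches this threshold. Each bad event is a deviation of a sum
over the coordinates `l` of bounded, mean-zero terms that depend only on the column
`(x_i l)_i`; these columns are independent because the vectors are independent and each has
independent coordinates, so Hoeffding's inequality bounds every bad event and a union bound
finishes. -/

open MeasureTheory ProbabilityTheory Measure Real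

section

variable {Ω : Type*} [MeasurableSpace Ω] {P : Measure Ω}

lemma iIndepFun_curry [IsProbabilityMeasure P] {ι κ 𝓧 : Type*} [MeasurableSpace 𝓧]
    {X : ι → κ → Ω → 𝓧}
    (mX : ∀ i j, Measurable (X i j)) (h : iIndepFun (fun (p : ι × κ) ω ↦ X p.1 p.2 ω) P) :
    iIndepFun (fun i ω ↦ (X i · ω)) P := by
  have hrow (i : ι) : P.map (fun ω ↦ (X i · ω)) = infinitePi (fun j ↦ P.map (X i j)) :=
    (iIndepFun_iff_map_fun_eq_infinitePi_map (mX i)).1 <|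
      h.precomp (g := fun j ↦ (i, j)) (Prod.mk_right_injective i)
  have : ∀ i j, IsProbabilityMeasure (P.map (X i j)) :=
    fun i j ↦ isProbabilityMeasure_map (mX i j).aemeasurable
  rw [iIndepFun_iff_map_fun_eq_infinitePi_map (by fun_prop), funext hrow,
    ← infinitePi_map_curry, ← (iIndepFun_iff_map_fun_eq_infinitePi_map (by fun_prop)).1 h,
    map_map (by fun_prop) (by fun_prop)]
  rfl

lemma iIndepFun_transpose [IsProbabilityMeasure P] {ι κ 𝓧 : Type*} [MeasurableSpace 𝓧]
    {X : ι → κ → Ω → 𝓧}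
    (mX : ∀ i j, Measurable (X i j)) (h₁ : iIndepFun (fun i ω ↦ (X i · ω)) P)
    (h₂ : ∀ i, iIndepFun (X i) P) :
    iIndepFun (fun j ω ↦ (X · j ω)) P :=
  iIndepFun_curry (fun j i ↦ mX i j) <|
    (iIndepFun_uncurry' mX h₁ h₂).precomp (g := Prod.swap) Prod.swap_injective

lemma integral_mul_eq_zero_of_iIndepFun {ι κ : Type*} {x : ι → Ω → κ → ℝ}
    (hmeas : ∀ i, Measurable (x i)) (hindep : iIndepFun x P)
    (hmean : ∀ i l, ∫ ω, x i ω l ∂P = 0) {i i' : ι} (hi : i ≠ i') (l l' : κ) :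
    ∫ ω, x i ω l * x i' ω l' ∂P = 0 := by
  have hind : IndepFun (fun ω ↦ x i ω l) (fun ω ↦ x i' ω l') P :=
    (hindep.indepFun hi).comp (measurable_pi_apply l) (measurable_pi_apply l')
  rw [hind.integral_fun_mul_eq_mul_integral (hmeas i).eval.aestronglyMeasurable
    (hmeas i').eval.aestronglyMeasurable, hmean, zero_mul]

lemma measureReal_sum_ge_le_of_mem_Icc [IsProbabilityMeasure P] {ι : Type*} [Fintype ι]
    {X : ι → Ω → ℝ}
    (h_indep : iIndepFun X P) (hX : ∀ i, AEMeasurable (X i) P) {a : ι → ℝ} {d : ℝ}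
    (h_bound : ∀ i, ∀ᵐ ω ∂P, X i ω ∈ Set.Icc (a i) (a i + d))
    (h_mean : ∀ i, ∫ ω, X i ω ∂P = 0) {c : ℝ} (hc : 0 ≤ c) :
    P.real {ω | c ≤ ∑ i, X i ω} ≤ exp (-(2 * c ^ 2 / (Fintype.card ι * d ^ 2))) := by
  have h_subG (i : ι) (_ : i ∈ Finset.univ) := hasSubgaussianMGF_of_mem_Icc_of_integral_eq_zero
    (hX i) (h_bound i) (h_mean i)
  refine (HasSubgaussianMGF.measure_sum_ge_le_of_iIndepFun h_indep h_subG hc).trans_eq ?_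
  congr 1
  simp only [add_sub_cancel_left, Finset.sum_const, Finset.card_univ, nsmul_eq_mul]
  push_cast
  rw [norm_eq_abs, div_pow, sq_abs]
  ring

lemma measureReal_sum_ge_le_of_columns [IsProbabilityMeasure P] {ι κ : Type*} [Fintype κ]
    {x : ι → Ω → κ → ℝ} (hmeas : ∀ i, Measurable (x i)) (hindep : iIndepFun x P)
    (hcomp : ∀ i, iIndepFun (fun l ω ↦ x i ω l) P) {g : κ → (ι → ℝ) → ℝ}
    (hg : ∀ l, Measurable (g l)) {a : κ → ℝ} {d : ℝ}
    (h_bound : ∀ l ω, g l (x · ω l) ∈ Set.Icc (a l) (a l + d))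
    (h_mean : ∀ l, ∫ ω, g l (x · ω l) ∂P = 0) {c : ℝ} (hc : 0 ≤ c) :
    P.real {ω | c ≤ ∑ l, g l (x · ω l)} ≤ exp (-(2 * c ^ 2 / (Fintype.card κ * d ^ 2))) := by
  have hcols := iIndepFun_transpose (X := fun i l ω ↦ x i ω l) (fun i l ↦ (hmeas i).eval)
    hindep hcomp
  have hmeas_col (l : κ) : Measurable fun ω ↦ g l (x · ω l) :=
    (hg l).comp (measurable_pi_lambda _ fun i ↦ (hmeas i).eval)
  exact measureReal_sum_ge_le_of_mem_Icc (hcols.comp g hg) (fun l ↦ (hmeas_col l).aemeasurable)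
    (fun l ↦ ae_of_all _ (h_bound l)) h_mean hc

lemma mul_mem_Icc_neg_one_one_s6 {p q : ℝ} (hp : p ∈ Set.Icc (-1 : ℝ) 1)
    (hq : q ∈ Set.Icc (-1 : ℝ) 1) : p * q ∈ Set.Icc (-1 : ℝ) 1 := by
  rw [Set.mem_Icc, ← abs_le] at *
  rw [abs_mul]
  exact mul_le_one₀ hp (abs_nonneg q) hq

lemma inv_card_mul_sum_mem_Icc {ι : Type*} [Fintype ι] {y : ι → ℝ}
    (hy : ∀ i, y i ∈ Set.Icc (-1 : ℝ) 1) :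
    (Fintype.card ι : ℝ)⁻¹ * ∑ i, y i ∈ Set.Icc (-1 : ℝ) 1 := by
  rw [Set.mem_Icc, ← abs_le, abs_mul, abs_inv, Nat.abs_cast]
  calc (Fintype.card ι : ℝ)⁻¹ * |∑ i, y i| ≤ (Fintype.card ι : ℝ)⁻¹ * Fintype.card ι := by
        gcongr
        simpa using Finset.abs_sum_le_sum_abs y Finset.univ |>.trans
          (Finset.sum_le_sum fun i _ ↦ abs_le.2 (hy i))
    _ ≤ 1 := inv_mul_le_one

lemma measureReal_sum_sq_deficit_ge_le [IsProbabilityMeasure P] {κ : Type*} [Fintype κ]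
    {y : Ω → κ → ℝ} (hmeas : Measurable y) (hindep : iIndepFun (fun l ω ↦ y ω l) P)
    (hbound : ∀ l ω, y ω l ∈ Set.Icc (-1 : ℝ) 1) {σ : κ → ℝ}
    (hvar : ∀ l, ∫ ω, y ω l ^ 2 ∂P = σ l ^ 2) {c : ℝ} (hc : 0 ≤ c) :
    P.real {ω | c ≤ ∑ l, (σ l ^ 2 - y ω l ^ 2)} ≤ exp (-(2 * c ^ 2 / Fintype.card κ)) := by
  have hsq_mem (l : κ) (ω : Ω) : y ω l ^ 2 ∈ Set.Icc (0 : ℝ) 1 :=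
    ⟨sq_nonneg _, by simpa [sq] using (mul_mem_Icc_neg_one_one_s6 (hbound l ω) (hbound l ω)).2⟩
  refine (measureReal_sum_ge_le_of_mem_Icc (X := fun l ω ↦ σ l ^ 2 - y ω l ^ 2)
    (a := fun l ↦ σ l ^ 2 - 1) (d := 1) (hindep.comp (fun l v ↦ σ l ^ 2 - v ^ 2) (by fun_prop))
    (fun l ↦ by fun_prop)
    (fun l ↦ ae_of_all _ fun ω ↦ ⟨by linarith [(hsq_mem l ω).2], by linarith [(hsq_mem l ω).1]⟩)
    (fun l ↦ ?_) hc).trans_eq (by ring_nf)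
  have hint : Integrable (fun ω ↦ y ω l ^ 2) P :=
    .of_mem_Icc 0 1 (by fun_prop) (ae_of_all _ (hsq_mem l))
  simp [integral_sub (integrable_const _) hint, hvar]

lemma measureReal_sum_neg_mul_ge_le [IsProbabilityMeasure P] {ι κ : Type*} [Fintype κ]
    {x : ι → Ω → κ → ℝ} (hmeas : ∀ i, Measurable (x i)) (hindep : iIndepFun x P)
    (hcomp : ∀ i, iIndepFun (fun l ω ↦ x i ω l) P)
    (hbound : ∀ i l ω, x i ω l ∈ Set.Icc (-1 : ℝ) 1) (hmean : ∀ i l, ∫ ω, x i ω l ∂P = 0)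
    {i i' : ι} (hi : i ≠ i') {c : ℝ} (hc : 0 ≤ c) :
    P.real {ω | c ≤ ∑ l, -(x i ω l * x i' ω l)} ≤
      exp (-(c ^ 2 / (2 * Fintype.card κ))) := by
  refine (measureReal_sum_ge_le_of_columns (g := fun _ v ↦ -(v i * v i')) (a := fun _ ↦ -1)
    (d := 2) hmeas hindep hcomp (fun _ ↦ by fun_prop) (fun l ω ↦ ?_) (fun l ↦ ?_) hc).trans_eq
    (by ring_nf)
  · have h := mul_mem_Icc_neg_one_one_s6 (hbound i l ω) (hbound i' l ω)
    constructor <;> linarith [h.1, h.2]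
  · rw [integral_neg, integral_mul_eq_zero_of_iIndepFun hmeas hindep hmean hi, neg_zero]

lemma measureReal_sum_mul_mean_ge_le [IsProbabilityMeasure P] {ι κ ν : Type*} [Fintype κ]
    [Fintype ν] {x : ι → Ω → κ → ℝ} (hmeas : ∀ i, Measurable (x i)) (hindep : iIndepFun x P)
    (hcomp : ∀ i, iIndepFun (fun l ω ↦ x i ω l) P)
    (hbound : ∀ i l ω, x i ω l ∈ Set.Icc (-1 : ℝ) 1) (hmean : ∀ i l, ∫ ω, x i ω l ∂P = 0)
    (f : ν → ι) {i : ι} (hi : ∀ j, i ≠ f j) {c : ℝ} (hc : 0 ≤ c) :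
    P.real {ω | c ≤ ∑ l, x i ω l * ((Fintype.card ν : ℝ)⁻¹ * ∑ j, x (f j) ω l)} ≤
      exp (-(c ^ 2 / (2 * Fintype.card κ))) := by
  refine (measureReal_sum_ge_le_of_columns
    (g := fun _ v ↦ v i * ((Fintype.card ν : ℝ)⁻¹ * ∑ j, v (f j))) (a := fun _ ↦ -1)
    (d := 2) hmeas hindep hcomp (fun _ ↦ by fun_prop) (fun l ω ↦ ?_) (fun l ↦ ?_) hc).trans_eq
    (by ring_nf)
  · have h := mul_mem_Icc_neg_one_one_s6 (hbound i l ω)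
      (inv_card_mul_sum_mem_Icc fun j ↦ hbound (f j) l ω)
    constructor <;> linarith [h.1, h.2]
  · have hint (j : ν) : Integrable (fun ω ↦ x i ω l * x (f j) ω l) P :=
      .of_mem_Icc (-1) 1 (by fun_prop)
        (ae_of_all _ fun ω ↦ mul_mem_Icc_neg_one_one_s6 (hbound i l ω) (hbound (f j) l ω))
    simp_rw [Finset.mul_sum, mul_left_comm (x i _ l)]
    rw [integral_finsetSum _ fun j _ ↦ (hint j).const_mul _]
    simp [integral_const_mul, integral_mul_eq_zero_of_iIndepFun hmeas hindep hmean (hi _)]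

lemma div_card_le_sum_mul_mean {ι κ : Type*} [Fintype ι] [LinearOrder ι] [Fintype κ]
    (y : ι → κ → ℝ) {a b : ℝ} (hdiag : ∀ j, a ≤ ∑ l, y j l ^ 2)
    (hoff : ∀ i j, i < j → -b ≤ ∑ l, y i l * y j l) (j : ι) :
    (a - (Fintype.card ι - 1) * b) / Fintype.card ι ≤
      ∑ l, y j l * ((Fintype.card ι : ℝ)⁻¹ * ∑ i, y i l) := by
  have hne (i : ι) (hi : i ≠ j) : -b ≤ ∑ l, y j l * y i l := by
    rcases hi.lt_or_gt with h | h
    · simpa only [mul_comm] using hoff i j h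
    · exact hoff j i h
  have hsum : a - (Fintype.card ι - 1) * b ≤ ∑ i, ∑ l, y j l * y i l := by
    rw [← Finset.add_sum_erase _ _ (Finset.mem_univ j)]
    have hrest := Finset.card_nsmul_le_sum _ _ (-b)
      fun i (hi : i ∈ Finset.univ.erase j) ↦ hne i (Finset.ne_of_mem_erase hi)
    rw [Finset.card_erase_of_mem (Finset.mem_univ j), nsmul_eq_mul, Finset.card_univ,
      Nat.cast_pred (Fintype.card_pos_iff.2 ⟨j⟩)] at hrest
    simp only [← sq]
    linarith [hdiag j]
  calc (a - (Fintype.card ι - 1) * b) / Fintype.card ι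
      ≤ (Fintype.card ι : ℝ)⁻¹ * ∑ i, ∑ l, y j l * y i l := by
        rw [div_eq_inv_mul]; gcongr
    _ = ∑ l, y j l * ((Fintype.card ι : ℝ)⁻¹ * ∑ i, y i l) := by
        simp_rw [Finset.mul_sum, Finset.sum_comm (γ := ι)]
        exact Finset.sum_congr rfl fun _ _ ↦ Finset.sum_congr rfl fun _ _ ↦ by ring

lemma mean_hyperplane_separates {κ : Type*} [Fintype κ] {k M : ℕ} {u : Fin k → κ → ℝ}
    {v : Fin M → κ → ℝ} {σ : κ → ℝ} {R ε δ : ℝ} (hR : 0 < R) (hRσ : R ^ 2 = ∑ l, σ l ^ 2)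
    (hnorm : ∀ j, ∑ l, (σ l ^ 2 - u j l ^ 2) < ε * R ^ 2)
    (horth : ∀ i j, i < j → ∑ l, -(u i l * u j l) < δ * R ^ 2)
    (hfar : ∀ i, ∑ l, v i l * ((k : ℝ)⁻¹ * ∑ j, u j l) < (1 - ε - δ * (k - 1)) * R ^ 2 / k) :
    (∀ j, (1 - ε - δ * (k - 1)) / k ≤ (∑ l, u j l * ((k : ℝ)⁻¹ * ∑ i, u i l)) / R ^ 2) ∧
      ∀ i, (∑ l, v i l * ((k : ℝ)⁻¹ * ∑ j, u j l)) / R ^ 2 < (1 - ε - δ * (k - 1)) / k := by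
  have hdiag (j : Fin k) : (1 - ε) * R ^ 2 ≤ ∑ l, u j l ^ 2 := by
    linarith [hnorm j, Finset.sum_sub_distrib (s := Finset.univ) (fun l ↦ σ l ^ 2) (u j · ^ 2)]
  have hoff (i j : Fin k) (h : i < j) : -(δ * R ^ 2) ≤ ∑ l, u i l * u j l := by
    linarith [horth i j h, Finset.sum_neg_distrib (s := Finset.univ) (fun l ↦ u i l * u j l)]
  refine ⟨fun j ↦ ?_, fun i ↦ ?_⟩
  · have := div_card_le_sum_mul_mean u hdiag hoff j
    simp only [Fintype.card_fin] at this
    rw [le_div_iff₀ (by positivity)]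
    linarith [show (1 - ε - δ * (k - 1)) / k * R ^ 2
      = ((1 - ε) * R ^ 2 - (k - 1) * (δ * R ^ 2)) / k by ring]
  · rw [div_lt_iff₀ (by positivity)]
    linarith [hfar i, show (1 - ε - δ * (k - 1)) / k * R ^ 2
      = (1 - ε - δ * (k - 1)) * R ^ 2 / k by ring]

lemma measureReal_biUnion_le_card_mul {ι : Type*} (s : Finset ι) {A : ι → Set Ω} {e : ℝ}
    (h : ∀ i ∈ s, P.real (A i) ≤ e) : P.real (⋃ i ∈ s, A i) ≤ s.card * e :=
  (measureReal_biUnion_finset_le s A).trans <| by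
    simpa using Finset.sum_le_card_nsmul s _ e h

lemma one_sub_measureReal_le_of_compl_subset [IsProbabilityMeasure P] {s t : Set Ω}
    (h : sᶜ ⊆ t) : 1 - P.real t ≤ P.real s := by
  have := measureReal_union_le (μ := P) s sᶜ
  rw [Set.union_compl_self, probReal_univ] at this
  linarith [measureReal_mono (μ := P) h]

lemma one_sub_card_mul_le_measureReal_of_compl_subset [IsProbabilityMeasure P]
    {ι₁ ι₂ ι₃ : Type*} {s₁ : Finset ι₁} {s₂ : Finset ι₂} {s₃ : Finset ι₃} {A₁ : ι₁ → Set Ω}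
    {A₂ : ι₂ → Set Ω} {A₃ : ι₃ → Set Ω} {e₁ e₂ e₃ : ℝ} (h₁ : ∀ i ∈ s₁, P.real (A₁ i) ≤ e₁)
    (h₂ : ∀ i ∈ s₂, P.real (A₂ i) ≤ e₂) (h₃ : ∀ i ∈ s₃, P.real (A₃ i) ≤ e₃) {s : Set Ω}
    (hs : sᶜ ⊆ (⋃ i ∈ s₁, A₁ i) ∪ (⋃ i ∈ s₂, A₂ i) ∪ ⋃ i ∈ s₃, A₃ i) :
    1 - s₁.card * e₁ - s₂.card * e₂ - s₃.card * e₃ ≤ P.real s := by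
  refine le_trans ?_ (one_sub_measureReal_le_of_compl_subset hs)
  linarith [measureReal_union_le (μ := P) ((⋃ i ∈ s₁, A₁ i) ∪ ⋃ i ∈ s₂, A₂ i) (⋃ i ∈ s₃, A₃ i),
    measureReal_union_le (μ := P) (⋃ i ∈ s₁, A₁ i) (⋃ i ∈ s₂, A₂ i),
    measureReal_biUnion_le_card_mul s₁ h₁, measureReal_biUnion_le_card_mul s₂ h₂,
    measureReal_biUnion_le_card_mul s₃ h₃]

end

theorem k_element_separation_uncorrelated_general
    {Ω : Type*} [MeasurableSpace Ω] (P : Measure Ω) [IsProbabilityMeasure P]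
    (n M k : ℕ)
    (x : Fin (M + k) → Ω → (Fin n → ℝ))
    (hmeas : ∀ i, Measurable (x i))
    (hindep : iIndepFun x P)
    (hcompindep : ∀ i, iIndepFun (fun j ω => x i ω j) P)
    (hbound : ∀ i j ω, x i ω j ∈ Set.Icc (-1 : ℝ) 1)
    (hmean : ∀ i j, ∫ ω, x i ω j ∂P = 0)
    (σ : Fin n → ℝ) (hvar : ∀ i j, ∫ ω, (x i ω j) ^ 2 ∂P = (σ j) ^ 2)
    (R0 : ℝ) (hR0 : 0 < R0) (hR0sq : R0 ^ 2 = ∑ j, (σ j) ^ 2)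
    (δ : ℝ) (hδ : 0 < δ)
    (ε : ℝ) (hε : 0 < ε) (hpos : 0 < 1 - ε - δ * (k - 1)) :
    1 - k * Real.exp (-(2 * R0 ^ 4 * ε ^ 2 / n))
      - (k * (k - 1) / 2) * Real.exp (-(R0 ^ 4 * δ ^ 2 / (2 * n)))
      - M * Real.exp (-(R0 ^ 4 * (1 - ε - δ * (k - 1)) ^ 2 / (2 * k ^ 2 * n))) ≤
    (P {ω |
        (∀ j : Fin k,
          (1 - ε - δ * (k - 1)) / k ≤
            (∑ l, x (Fin.natAdd M j) ω l *
              ((k : ℝ)⁻¹ * ∑ i : Fin k, x (Fin.natAdd M i) ω l)) / R0 ^ 2) ∧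
        ∀ i : Fin M,
          (∑ l, x (Fin.castAdd k i) ω l *
            ((k : ℝ)⁻¹ * ∑ i' : Fin k, x (Fin.natAdd M i') ω l)) / R0 ^ 2 <
              (1 - ε - δ * (k - 1)) / k}).toReal := by
  set y : Fin k → Fin (M + k) := Fin.natAdd M
  set pairs : Finset (Fin k × Fin k) := {p ∈ Finset.univ ×ˢ Finset.univ | p.1 < p.2}
  set A : Fin k → Set Ω := fun j ↦ {ω | ε * R0 ^ 2 ≤ ∑ l, (σ l ^ 2 - x (y j) ω l ^ 2)}
  set B : Fin k × Fin k → Set Ω := fun p ↦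
    {ω | δ * R0 ^ 2 ≤ ∑ l, -(x (y p.1) ω l * x (y p.2) ω l)}
  set C : Fin M → Set Ω := fun i ↦
    {ω | (1 - ε - δ * (k - 1)) * R0 ^ 2 / k ≤
      ∑ l, x (Fin.castAdd k i) ω l * ((k : ℝ)⁻¹ * ∑ j, x (y j) ω l)}
  have hA (j : Fin k) (_ : j ∈ Finset.univ) : P.real (A j) ≤ exp (-(2 * R0 ^ 4 * ε ^ 2 / n)) :=
    (measureReal_sum_sq_deficit_ge_le (hmeas _) (hcompindep _) (hbound _) (hvar _)
      (by positivity)).trans_eq (by simp only [Fintype.card_fin]; ring_nf)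
  have hB (p : Fin k × Fin k) (hp : p ∈ pairs) :
      P.real (B p) ≤ exp (-(R0 ^ 4 * δ ^ 2 / (2 * n))) :=
    (measureReal_sum_neg_mul_ge_le hmeas hindep hcompindep hbound hmean
      ((Fin.natAdd_injective k M).ne (Finset.mem_filter.1 hp).2.ne)
      (by positivity)).trans_eq (by simp only [Fintype.card_fin]; ring_nf)
  have hC (i : Fin M) (_ : i ∈ Finset.univ) :
      P.real (C i) ≤ exp (-(R0 ^ 4 * (1 - ε - δ * (k - 1)) ^ 2 / (2 * k ^ 2 * n))) := by
    have hne (j : Fin k) : Fin.castAdd k i ≠ y j :=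
      Fin.ne_of_val_ne (by simp only [y, Fin.val_castAdd, Fin.val_natAdd]; omega)
    have h := measureReal_sum_mul_mean_ge_le hmeas hindep hcompindep hbound hmean y hne
      (c := (1 - ε - δ * (k - 1)) * R0 ^ 2 / k) (by positivity)
    simp only [Fintype.card_fin] at h
    exact h.trans_eq (by ring_nf)
  have hcard : (pairs.card : ℝ) = k * (k - 1) / 2 := by
    rw [Finset.card_product_filter_lt, Finset.card_univ, Fintype.card_fin, Nat.cast_choose_two]
  refine le_of_eq_of_le ?_ (one_sub_card_mul_le_measureReal_of_compl_subset hA hB hC ?_)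
  · simp only [hcard, Finset.card_univ, Fintype.card_fin]
  intro ω hω
  by_contra hU
  simp only [Set.mem_union, Set.mem_iUnion, not_or, not_exists, Set.mem_ofPred_eq, not_le,
    A, B, C] at hU
  obtain ⟨⟨hAω, hBω⟩, hCω⟩ := hU
  exact hω (mean_hyperplane_separates hR0 hR0sq (fun j ↦ hAω j (Finset.mem_univ j))
    (fun i j h ↦ hBω (i, j) (by simp [pairs, h])) (fun i ↦ hCω i (Finset.mem_univ i)))

/-- k-element stochastic separation without a correlation assumption:
the hyperplane built on the mean of the k points `x (M+1), …, x (M+k)` separates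
them from `x 1, …, x M` with the stated probability. -/
theorem k_element_separation_uncorrelated
    {Ω : Type*} [MeasurableSpace Ω] (P : Measure Ω) [IsProbabilityMeasure P]
    (n M k : ℕ) (hn : 0 < n) (hk : 1 ≤ k)
    (x : Fin (M + k) → Ω → (Fin n → ℝ))
    (hmeas : ∀ i, Measurable (x i))
    (hindep : iIndepFun x P)
    (hident : ∀ i i', Measure.map (x i) P = Measure.map (x i') P)
    (hcompindep : ∀ i, iIndepFun (fun j ω => x i ω j) P)
    (hbound : ∀ i j ω, x i ω j ∈ Set.Icc (-1 : ℝ) 1)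
    (hmean : ∀ i j, ∫ ω, x i ω j ∂P = 0)
    (σ : Fin n → ℝ) (hvar : ∀ i j, ∫ ω, (x i ω j) ^ 2 ∂P = (σ j) ^ 2)
    (R0 : ℝ) (hR0 : 0 < R0) (hR0sq : R0 ^ 2 = ∑ j, (σ j) ^ 2)
    (δ : ℝ) (hδ : 0 < δ)
    (ε : ℝ) (hε : 0 < ε) (hε1 : ε < 1) (hpos : 0 < 1 - ε - δ * (k - 1)) :
    1 - k * Real.exp (-(2 * R0 ^ 4 * ε ^ 2 / n))
      - (k * (k - 1) / 2) * Real.exp (-(R0 ^ 4 * δ ^ 2 / (2 * n)))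
      - M * Real.exp (-(R0 ^ 4 * (1 - ε - δ * (k - 1)) ^ 2 / (2 * k ^ 2 * n))) ≤
    (P {ω |
        (∀ j : Fin k,
          (1 - ε - δ * (k - 1)) / k ≤
            (∑ l, x (Fin.natAdd M j) ω l *
              ((k : ℝ)⁻¹ * ∑ i : Fin k, x (Fin.natAdd M i) ω l)) / R0 ^ 2) ∧
        ∀ i : Fin M,
          (∑ l, x (Fin.castAdd k i) ω l *
            ((k : ℝ)⁻¹ * ∑ i' : Fin k, x (Fin.natAdd M i') ω l)) / R0 ^ 2 <
              (1 - ε - δ * (k - 1)) / k}).toReal :=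
  k_element_separation_uncorrelated_general P n M k x hmeas hindep hcompindep hbound hmean σ hvar R0
    hR0 hR0sq δ hδ ε hε hpos
end

section
/- Let x_1,...,x_M be i.i.d. random points, h(x) = ⟨x, w⟩ - c a fixed affine functional, and 0 ≤ p* < 1 such that P(h(x_i) ≥ 0) ≤ p* for each i. Then P(h(x_i) ≥ 0 for at most m of the M points) ≥ (1-p*)^M · exp((M-m+1)p*/(1-p*)) · (1 - (1/m!)((M-m+1)p*/(1-p*))^m). -/
/-!
The number of points in the half-space `{h ≥ 0}` is binomial `Bin(M, q)` with
`q = P(h(x i) ≥ 0) ≤ p*`, and the lower tail `P(Bin(M, q) < m)` is antitone in `q`, so it is at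
least its value at `p*`. For `k < m` we have `C(M, k) ≥ (M - m + 1)^k / k!`, which bounds that
value below by `(1 - p*)^M ∑_{k<m} t^k / k!` with `t = (M - m + 1) p* / (1 - p*)`, and the
truncated exponential series is at least `e^t (1 - t^m / m!)`.
-/

open MeasureTheory ProbabilityTheory Finset Nat

theorem Real.exp_mul_one_sub_le_sum_range {t : ℝ} (ht : 0 ≤ t) (m : ℕ) :
    Real.exp t * (1 - t ^ m / m !) ≤ ∑ k ∈ range m, t ^ k / k ! := by
  have hsum : Summable fun k : ℕ => t ^ k / k ! := Real.summable_pow_div_factorial t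
  have hexp : Real.exp t = ∑' k : ℕ, t ^ k / k ! := by
    rw [Real.exp_eq_exp_ℝ, NormedSpace.exp_eq_tsum_div]
  -- `(j + m)! ≥ j! m!` bounds the tail of the series by `t ^ m / m! * exp t`
  have htail : ∑' j : ℕ, t ^ (j + m) / (j + m)! ≤ t ^ m / m ! * Real.exp t := by
    rw [hexp, ← tsum_mul_left]
    refine ((summable_nat_add_iff m).2 hsum).tsum_le_tsum (fun j => ?_) (hsum.mul_left _)
    have hfac : (m ! * j ! : ℝ) ≤ (j + m)! := by
      exact_mod_cast Nat.le_of_dvd (factorial_pos _)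
        (by simpa [mul_comm, add_comm] using Nat.factorial_mul_factorial_dvd_factorial_add m j)
    calc t ^ (j + m) / (j + m)! ≤ t ^ (m + j) / (m ! * j !) := by
          rw [add_comm m j]; exact div_le_div_of_nonneg_left (by positivity) (by positivity) hfac
      _ = t ^ m / m ! * (t ^ j / j !) := by rw [pow_add]; field_simp
  have hsplit := hsum.sum_add_tsum_nat_add m
  rw [← hexp] at hsplit
  linarith

/-- `P(Bin(n, q) < m)`. -/
noncomputable def binomialLowerTail (n m : ℕ) (q : ℝ) : ℝ :=
  ∑ k ∈ range m, n.choose k * q ^ k * (1 - q) ^ (n - k)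

theorem hasDerivAt_choose_mul_pow_mul_one_sub_pow (n k : ℕ) (q : ℝ) :
    HasDerivAt (fun q : ℝ => n.choose k * q ^ k * (1 - q) ^ (n - k))
      (k * n.choose k * q ^ (k - 1) * (1 - q) ^ (n - k)
        - (k + 1 : ℕ) * n.choose (k + 1) * q ^ (k + 1 - 1) * (1 - q) ^ (n - (k + 1))) q := by
  have h := ((hasDerivAt_pow k q).const_mul (n.choose k : ℝ)).mul
    ((hasDerivAt_pow (n - k) (1 - q)).comp q ((hasDerivAt_id q).const_sub 1))
  refine h.congr_deriv ?_
  -- `(k + 1) C(n, k + 1) = (n - k) C(n, k)` makes the derivative telescope over `k`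
  have hchoose : ((k + 1 : ℕ) : ℝ) * n.choose (k + 1) = n.choose k * (n - k : ℕ) := by
    exact_mod_cast (mul_comm _ _).trans (Nat.choose_succ_right_eq n k)
  rw [hchoose, Nat.add_one_sub_one, Nat.sub_add_eq]
  simp only [Function.comp]
  ring

theorem binomialLowerTail_antitoneOn (n m : ℕ) :
    AntitoneOn (binomialLowerTail n m) (Set.Icc 0 1) := by
  set g : ℕ → ℝ → ℝ := fun k q => k * n.choose k * q ^ (k - 1) * (1 - q) ^ (n - k)
  have hderiv : ∀ q, HasDerivAt (binomialLowerTail n m) (g 0 q - g m q) q := fun q => by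
    rw [← sum_range_sub' (fun k => g k q)]
    exact HasDerivAt.fun_sum fun k _ => hasDerivAt_choose_mul_pow_mul_one_sub_pow n k q
  refine antitoneOn_of_hasDerivWithinAt_nonpos (convex_Icc 0 1)
    (fun q _ => (hderiv q).continuousAt.continuousWithinAt)
    (fun q _ => (hderiv q).hasDerivWithinAt) fun q hq => ?_
  rw [interior_Icc] at hq
  have hgm : 0 ≤ g m q :=
    mul_nonneg (mul_nonneg (by positivity) (pow_nonneg hq.1.le _))
      (pow_nonneg (by linarith [hq.2]) _)
  simpa [g] using hgm

theorem sub_add_one_pow_div_factorial_le_choose {n m k : ℕ} (hkm : k < m) (hmn : m ≤ n + 1) :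
    ((n : ℝ) - m + 1) ^ k / k ! ≤ n.choose k := by
  have hbase : (0 : ℝ) ≤ n - m + 1 := by
    have : (m : ℝ) ≤ n + 1 := by exact_mod_cast hmn
    linarith
  have hle : (n : ℝ) - m + 1 ≤ (n + 1 - k : ℕ) := by
    rw [Nat.cast_sub (by omega)]
    have : (k : ℝ) + 1 ≤ m := by exact_mod_cast hkm
    push_cast
    linarith
  calc ((n : ℝ) - m + 1) ^ k / k ! ≤ (n + 1 - k : ℕ) ^ k / k ! := by gcongr
    _ ≤ n.choose k := Nat.pow_le_choose k n

theorem one_sub_pow_mul_sum_le_binomialLowerTail {n m : ℕ} (hmn : m ≤ n + 1) {p : ℝ}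
    (hp0 : 0 ≤ p) (hp1 : p < 1) :
    (1 - p) ^ n * ∑ k ∈ range m, (((n : ℝ) - m + 1) * p / (1 - p)) ^ k / k ! ≤
      binomialLowerTail n m p := by
  rw [mul_sum, binomialLowerTail]
  refine sum_le_sum fun k hk => ?_
  have hkm := mem_range.1 hk
  have hsplit : (1 - p) ^ n = (1 - p) ^ (n - k) * (1 - p) ^ k := by
    rw [← pow_add, Nat.sub_add_cancel (by omega)]
  have h1p : 1 - p ≠ 0 := by linarith
  calc (1 - p) ^ n * ((((n : ℝ) - m + 1) * p / (1 - p)) ^ k / k !)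
      = ((n : ℝ) - m + 1) ^ k / k ! * (p ^ k * (1 - p) ^ (n - k)) := by
        rw [hsplit, div_pow, mul_pow]
        field_simp
    _ ≤ n.choose k * (p ^ k * (1 - p) ^ (n - k)) := by
        have : 0 ≤ 1 - p := by linarith
        exact mul_le_mul_of_nonneg_right (sub_add_one_pow_div_factorial_le_choose hkm hmn)
          (by positivity)
    _ = n.choose k * p ^ k * (1 - p) ^ (n - k) := by ring

section IndependentTrials

variable {Ω ι β : Type*} [MeasurableSpace Ω] [MeasurableSpace β] {μ : Measure Ω}
  [IsProbabilityMeasure μ] [Fintype ι] {x : ι → Ω → β} {B : Set β} [DecidablePred (· ∈ B)]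
  {q : ℝ}

theorem measurable_filter_mem (hmeas : ∀ i, Measurable (x i)) (hB : MeasurableSet B) :
    Measurable fun ω => univ.filter fun i => x i ω ∈ B :=
  measurable_finset_iff.2 fun i => by simpa using measurableSet_setOfPred.1 (hmeas i hB)

theorem measureReal_filter_mem_eq (hx : iIndepFun x μ)
    (hmeas : ∀ i, Measurable (x i)) (hB : MeasurableSet B) (hq : ∀ i, μ.real (x i ⁻¹' B) = q)
    (S : Finset ι) :
    μ.real {ω | univ.filter (fun i => x i ω ∈ B) = S} =
      q ^ #S * (1 - q) ^ (Fintype.card ι - #S) := by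
  classical
  set E : ι → Set β := fun i => if i ∈ S then B else Bᶜ
  have hset : {ω | univ.filter (fun i => x i ω ∈ B) = S} = ⋂ i ∈ univ, x i ⁻¹' E i := by
    ext ω
    simp only [Set.mem_ofPred_eq, Finset.ext_iff, mem_filter, mem_univ, true_and,
      Set.mem_iInter, Set.mem_preimage, E]
    refine forall_congr' fun i => ?_
    by_cases hi : i ∈ S <;> simp [hi]
  have hprob : ∀ i, μ.real (x i ⁻¹' E i) = if i ∈ S then q else 1 - q := by
    intro i
    by_cases hi : i ∈ S
    · simp [E, hi, hq]
    · simp [E, hi, Set.preimage_compl, probReal_compl_eq_one_sub (hmeas i hB), hq]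
  have hE : ∀ i ∈ univ, MeasurableSet (E i) := fun i _ => by
    dsimp only [E]; split_ifs; exacts [hB, hB.compl]
  rw [hset, measureReal_def, hx.measure_inter_preimage_eq_mul _ hE, ENNReal.toReal_prod]
  simp_rw [← measureReal_def, hprob]
  rw [prod_ite, filter_mem_eq_inter, univ_inter, filter_notMem_eq_sdiff, ← compl_eq_univ_sdiff,
    prod_const, prod_const, card_compl]

theorem measureReal_card_filter_mem_eq (hx : iIndepFun x μ)
    (hmeas : ∀ i, Measurable (x i)) (hB : MeasurableSet B) (hq : ∀ i, μ.real (x i ⁻¹' B) = q)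
    (k : ℕ) :
    μ.real {ω | #(univ.filter fun i => x i ω ∈ B) = k} =
      (Fintype.card ι).choose k * q ^ k * (1 - q) ^ (Fintype.card ι - k) := by
  classical
  have hset : {ω | #(univ.filter fun i => x i ω ∈ B) = k} =
      (fun ω => univ.filter fun i => x i ω ∈ B) ⁻¹' ↑(powersetCard k (univ : Finset ι)) := by
    ext ω; simp
  rw [hset, ← sum_measureReal_preimage_singleton _
    fun S _ => measurable_filter_mem hmeas hB (measurableSet_singleton S)]
  have hterm : ∀ S ∈ powersetCard k (univ : Finset ι),
      μ.real ((fun ω => univ.filter fun i => x i ω ∈ B) ⁻¹' {S}) =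
        q ^ k * (1 - q) ^ (Fintype.card ι - k) := by
    intro S hS
    rw [← (mem_powersetCard.1 hS).2]
    exact measureReal_filter_mem_eq hx hmeas hB hq S
  rw [sum_congr rfl hterm, sum_const, card_powersetCard, Finset.card_univ, nsmul_eq_mul, mul_assoc]

theorem measureReal_card_filter_mem_lt (hx : iIndepFun x μ)
    (hmeas : ∀ i, Measurable (x i)) (hB : MeasurableSet B) (hq : ∀ i, μ.real (x i ⁻¹' B) = q)
    (m : ℕ) :
    μ.real {ω | #(univ.filter fun i => x i ω ∈ B) < m} =
      binomialLowerTail (Fintype.card ι) m q := by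
  have hmeas_card : Measurable fun ω => #(univ.filter fun i => x i ω ∈ B) :=
    (measurable_of_countable fun s : Finset ι => #s).comp (measurable_filter_mem hmeas hB)
  have hset : {ω | #(univ.filter fun i => x i ω ∈ B) < m} =
      (fun ω => #(univ.filter fun i => x i ω ∈ B)) ⁻¹' ↑(range m) := by
    ext ω; simp
  rw [hset, ← sum_measureReal_preimage_singleton _
    fun k _ => hmeas_card (measurableSet_singleton k), binomialLowerTail]
  exact sum_congr rfl fun k _ => measureReal_card_filter_mem_eq hx hmeas hB hq k

end IndependentTrials

open Classical in
/-- Lemma on the number of spurious points: if `x 1, …, x M` are i.i.d. random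
points and `P(h(x i) ≥ 0) ≤ p*` for the affine functional `h(v) = ⟨v, w⟩ - c`,
then `h(x i) ≥ 0` for at most `m` of the points with probability at least
`(1-p*)^M exp((M-m+1)p*/(1-p*)) (1 - ((M-m+1)p*/(1-p*))^m / m!)`. -/
theorem at_most_m_points_above_hyperplane
    {Ω : Type*} [MeasurableSpace Ω] (P : Measure Ω) [IsProbabilityMeasure P]
    (n M m : ℕ) (hm : 1 ≤ m) (hmM : m ≤ M)
    (x : Fin M → Ω → (Fin n → ℝ))
    (hmeas : ∀ i, Measurable (x i))
    (hindep : iIndepFun x P)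
    (hident : ∀ i i', Measure.map (x i) P = Measure.map (x i') P)
    (w : Fin n → ℝ) (c : ℝ)
    (pstar : ℝ) (hp0 : 0 ≤ pstar) (hp1 : pstar < 1)
    (hp : ∀ i, (P {ω | 0 ≤ (∑ l, x i ω l * w l) - c}).toReal ≤ pstar) :
    (1 - pstar) ^ M * Real.exp (((M : ℝ) - m + 1) * pstar / (1 - pstar)) *
      (1 - (1 / (Nat.factorial m)) * (((M : ℝ) - m + 1) * pstar / (1 - pstar)) ^ m) ≤
    (P {ω |
        (Finset.univ.filter fun i : Fin M => 0 ≤ (∑ l, x i ω l * w l) - c).card ≤ m}).toReal := by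
  set B : Set (Fin n → ℝ) := {v | 0 ≤ (∑ l, v l * w l) - c}
  have hB : MeasurableSet B := measurableSet_le measurable_const (by fun_prop)
  set i₀ : Fin M := ⟨0, by omega⟩
  set q := P.real (x i₀ ⁻¹' B)
  have hq : ∀ i, P.real (x i ⁻¹' B) = q := fun i => by
    simp only [q, measureReal_def, ← Measure.map_apply (hmeas _) hB, hident i i₀]
  have hqp : q ≤ pstar := hp i₀
  set t := ((M : ℝ) - m + 1) * pstar / (1 - pstar)
  have ht : 0 ≤ t := by
    have : (m : ℝ) ≤ M := by exact_mod_cast hmM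
    have : 0 < 1 - pstar := by linarith
    exact div_nonneg (mul_nonneg (by linarith) hp0) this.le
  calc (1 - pstar) ^ M * Real.exp t * (1 - 1 / m ! * t ^ m)
      = (1 - pstar) ^ M * (Real.exp t * (1 - t ^ m / m !)) := by ring
    _ ≤ (1 - pstar) ^ M * ∑ k ∈ range m, t ^ k / k ! := by
        have : 0 ≤ 1 - pstar := by linarith
        exact mul_le_mul_of_nonneg_left (Real.exp_mul_one_sub_le_sum_range ht m) (by positivity)
    _ ≤ binomialLowerTail M m pstar :=
        one_sub_pow_mul_sum_le_binomialLowerTail (by omega) hp0 hp1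
    _ ≤ binomialLowerTail M m q :=
        binomialLowerTail_antitoneOn M m ⟨measureReal_nonneg, hqp.trans hp1.le⟩
          ⟨hp0, hp1.le⟩ hqp
    _ = P.real {ω | #(univ.filter fun i => x i ω ∈ B) < m} := by
        rw [measureReal_card_filter_mem_lt hindep hmeas hB hq, Fintype.card_fin]
    _ ≤ P.real {ω | #(univ.filter fun i => x i ω ∈ B) ≤ m} :=
        measureReal_mono (Set.ofPred_subset_ofPred.2 fun _ => le_of_lt)
end

section
/- Let C_n(ε) = B_n(1) ∩ {ξ ∈ R^n : ⟨x/‖x‖, ξ⟩ ≥ 1-ε} be a spherical cap of the unit n-ball (x ≠ 0 fixed, 0 < ε < 1), and let ρ(ε) = (1-(1-ε)^2)^{1/2}. Then Vol(C_n(ε)) / Vol(B_n(1)) ≤ ρ(ε)^n / 2. -/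
/-!
For a unit vector `u` and `0 ≤ t`, every `ξ` of the cap `‖ξ‖ ≤ 1, ⟪u, ξ⟫ ≥ t` satisfies
`‖ξ - t u‖² ≤ 1 - t²` and `⟪u, ξ - t u⟫ ≥ 0`, so the cap is a subset of a translate of the half of
the ball of radius `ρ = √(1 - t²)` on the side of `u`. That half-ball has measure `ρⁿ Vol(B)/2`,
because its mirror image under `ξ ↦ -ξ` is the other half and the two meet in a null hyperplane.
-/

open MeasureTheory Metric Module
open scoped Pointwise RealInnerProductSpace

section Halving

variable {E : Type*} [NormedAddCommGroup E] [NormedSpace ℝ E] [FiniteDimensional ℝ E]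
  [MeasurableSpace E] [BorelSpace E] (μ : Measure E) [μ.IsAddHaarMeasure]

/-- Negation swaps the two halves, which meet in the null hyperplane `ker f`. -/
theorem two_mul_measure_inter_setOf_nonneg {s : Set E} (hs : MeasurableSet s) (hneg : -s = s)
    {f : E →L[ℝ] ℝ} (hf : f ≠ 0) :
    2 * μ (s ∩ {ξ | 0 ≤ f ξ}) = μ s := by
  set S := s ∩ {ξ | 0 ≤ f ξ}
  set S' := s ∩ {ξ | f ξ ≤ 0}
  have hS' : MeasurableSet S' :=
    hs.inter (isClosed_le f.continuous continuous_const).measurableSet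
  have hneg_S : -S = S' := by
    ext ξ
    simp [S, S', hneg]
  have hunion : S ∪ S' = s := by
    ext ξ
    simp only [S, S', ← Set.inter_union_distrib_left, Set.mem_inter_iff, Set.mem_union,
      Set.mem_ofPred_eq, le_total, and_true]
  have hinter : μ (S ∩ S') = 0 := by
    have hker : LinearMap.ker (f : E →ₗ[ℝ] ℝ) ≠ ⊤ :=
      LinearMap.ker_eq_top.not.2 (by exact_mod_cast hf)
    refine measure_mono_null (fun ξ hξ => ?_) (Measure.addHaar_submodule μ _ hker)
    exact le_antisymm hξ.2.2 hξ.1.2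
  have := measure_union_add_inter (μ := μ) S hS'
  rw [hunion, hinter, add_zero, ← hneg_S, Measure.measure_neg] at this
  rw [two_mul, this]

end Halving

section Cap

variable {E : Type*} [NormedAddCommGroup E] [InnerProductSpace ℝ E]

def sphericalCap (u : E) (t : ℝ) : Set E := closedBall 0 1 ∩ {ξ | t ≤ ⟪u, ξ⟫}

def halfBall (u : E) (r : ℝ) : Set E := closedBall 0 r ∩ {ξ | 0 ≤ ⟪u, ξ⟫}

/-- For `ξ` in the cap, `‖ξ - t u‖² = ‖ξ‖² - 2t⟪u, ξ⟫ + t² ≤ 1 - t²`. -/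
theorem sphericalCap_subset_vadd_halfBall {u : E} (hu : ‖u‖ = 1) {t : ℝ} (ht : 0 ≤ t) :
    sphericalCap u t ⊆ (t • u) +ᵥ halfBall u √(1 - t ^ 2) := by
  rintro ξ ⟨hξ_ball, hξ_cap⟩
  rw [mem_closedBall_zero_iff] at hξ_ball
  have hξ_cap : t ≤ ⟪u, ξ⟫ := hξ_cap
  rw [Set.mem_vadd_set_iff_neg_vadd_mem, vadd_eq_add, neg_add_eq_sub]
  have huu : ⟪u, u⟫ = 1 := by rw [real_inner_self_eq_norm_sq, hu, one_pow]
  refine ⟨mem_closedBall_zero_iff.2 (Real.le_sqrt_of_sq_le ?_), ?_⟩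
  · rw [norm_sub_sq_real, real_inner_smul_right, real_inner_comm, norm_smul, hu,
      Real.norm_of_nonneg ht]
    nlinarith [mul_le_mul_of_nonneg_left hξ_cap ht, norm_nonneg ξ]
  · show 0 ≤ ⟪u, ξ - t • u⟫
    rw [inner_sub_right, real_inner_smul_right, huu]
    linarith

variable [FiniteDimensional ℝ E] [MeasurableSpace E] [BorelSpace E] (μ : Measure E)
  [μ.IsAddHaarMeasure]

theorem two_mul_addHaar_halfBall {u : E} (hu : u ≠ 0) {r : ℝ} (hr : 0 ≤ r) :
    2 * μ (halfBall u r) = ENNReal.ofReal (r ^ finrank ℝ E) * μ (closedBall 0 1) := by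
  have hf : innerSL ℝ u ≠ 0 := by
    rw [← norm_ne_zero_iff, innerSL_apply_norm]
    exact norm_ne_zero_iff.2 hu
  rw [← Measure.addHaar_closedBall' μ 0 hr, ← two_mul_measure_inter_setOf_nonneg μ
    measurableSet_closedBall (by simp) hf]
  rfl

theorem addHaar_sphericalCap_le {u : E} (hu : ‖u‖ = 1) {t : ℝ} (ht : 0 ≤ t) :
    μ (sphericalCap u t) ≤
      ENNReal.ofReal (√(1 - t ^ 2) ^ finrank ℝ E / 2) * μ (closedBall 0 1) := by
  have hu0 : u ≠ 0 := norm_ne_zero_iff.1 (hu ▸ one_ne_zero)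
  have htwo := two_mul_addHaar_halfBall μ hu0 (Real.sqrt_nonneg (1 - t ^ 2))
  calc μ (sphericalCap u t) ≤ μ (halfBall u √(1 - t ^ 2)) := by
        simpa only [measure_vadd] using
          measure_mono (μ := μ) (sphericalCap_subset_vadd_halfBall hu ht)
    _ = ENNReal.ofReal (√(1 - t ^ 2) ^ finrank ℝ E) * μ (closedBall 0 1) / 2 := by
        rw [← htwo, mul_comm, ENNReal.mul_div_cancel_right two_ne_zero ENNReal.ofNat_ne_top]
    _ = _ := by
        rw [ENNReal.ofReal_div_of_pos two_pos, ENNReal.ofReal_ofNat, ENNReal.mul_div_right_comm]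

end Cap

theorem cap_volume_upper_bound_general
    (n : ℕ) (x : EuclideanSpace ℝ (Fin n)) (hx : x ≠ 0)
    (ε : ℝ) (hε1 : ε < 1) :
    volume (Metric.closedBall (0 : EuclideanSpace ℝ (Fin n)) 1 ∩
        {ξ | 1 - ε ≤ (inner ℝ (‖x‖⁻¹ • x) ξ : ℝ)}) /
      volume (Metric.closedBall (0 : EuclideanSpace ℝ (Fin n)) 1) ≤
    ENNReal.ofReal ((Real.sqrt (1 - (1 - ε) ^ 2)) ^ n / 2) := by
  have hu : ‖‖x‖⁻¹ • x‖ = 1 := by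
    rw [norm_smul, norm_inv, norm_norm, inv_mul_cancel₀ (norm_ne_zero_iff.2 hx)]
  have hcap := addHaar_sphericalCap_le volume hu (sub_nonneg.2 hε1.le)
  rw [finrank_euclideanSpace_fin] at hcap
  exact ENNReal.div_le_of_le_mul hcap

/-- Upper bound for the relative volume of a spherical cap of the unit ball:
`Vol(C_n(ε))/Vol(B_n(1)) ≤ ρ(ε)ⁿ/2` with `ρ(ε) = √(1-(1-ε)²)`. -/
theorem cap_volume_upper_bound
    (n : ℕ) (hn : 1 ≤ n) (x : EuclideanSpace ℝ (Fin n)) (hx : x ≠ 0)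
    (ε : ℝ) (hε : 0 < ε) (hε1 : ε < 1) :
    volume (Metric.closedBall (0 : EuclideanSpace ℝ (Fin n)) 1 ∩
        {ξ | 1 - ε ≤ (inner ℝ (‖x‖⁻¹ • x) ξ : ℝ)}) /
      volume (Metric.closedBall (0 : EuclideanSpace ℝ (Fin n)) 1) ≤
    ENNReal.ofReal ((Real.sqrt (1 - (1 - ε) ^ 2)) ^ n / 2) :=
  cap_volume_upper_bound_general n x hx ε hε1
end

section
/- Let C_n(ε) be the unit-ball spherical cap of height ε with base radius ρ(ε) = √(1-(1-ε)^2), and let B_n(kρ(ε)) be the n-ball of radius kρ(ε) for k > 0. Then Vol(B_n(kρ(ε))) / Vol(C_n(ε)) < k^n · (2√π / ρ(ε)) · (Γ(n/2 + 3/2) / Γ(n/2 + 1)). -/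
/-!
In coordinates `(t, y)` along and across the axis `u`, the cap of height `ε` contains the solid
paraboloid `{1 - ε ≤ t ≤ 1, ‖y‖² ≤ (2 - ε)(1 - t)}`: since `t ≥ 1 - ε`, its slices satisfy
`‖y‖² ≤ (1 + t)(1 - t)`. The paraboloid has apex at the pole, height `ε` and base radius
`ρ = √(ε (2 - ε))`, so by Cavalieri its volume is `ρⁿ⁻¹ ε π^((n-1)/2) / Γ(n/2 + 3/2)`. Dividing
`Vol(B_n(kρ)) = (kρ)ⁿ π^(n/2) / Γ(n/2 + 1)` by it gives `kⁿ (ρ / ε) √π Γ(n/2 + 3/2) / Γ(n/2 + 1)`,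
and `ρ / ε < 2 / ρ` because `ρ² = 2ε - ε² < 2ε`.
-/

open MeasureTheory Metric Set

theorem InnerProductSpace.volume_closedBall_zero_one {E : Type*} [NormedAddCommGroup E]
    [InnerProductSpace ℝ E] [FiniteDimensional ℝ E] [MeasurableSpace E] [BorelSpace E] :
    volume (closedBall (0 : E) 1) = ENNReal.ofReal
      (√Real.pi ^ Module.finrank ℝ E / Real.Gamma (Module.finrank ℝ E / 2 + 1)) := by
  cases subsingleton_or_nontrivial E with
  | inl _ =>
    have hball : closedBall (0 : E) 1 = parallelepiped (stdOrthonormalBasis ℝ E) := by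
      rw [Subsingleton.eq_univ_of_nonempty (nonempty_closedBall.2 zero_le_one),
        Subsingleton.eq_univ_of_nonempty ⟨0, (mem_parallelepiped_iff _ _).2 ⟨0, by simp, by simp⟩⟩]
    rw [hball, OrthonormalBasis.volume_parallelepiped, Module.finrank_zero_of_subsingleton]
    simp
  | inr _ => simp [InnerProductSpace.volume_closedBall]

theorem MeasureTheory.Measure.prod_setOf_mem_closedBall {α F : Type*} [MeasurableSpace α]
    [NormedAddCommGroup F] [NormedSpace ℝ F] [MeasurableSpace F] [BorelSpace F]
    [FiniteDimensional ℝ F] (ν : Measure α) [SFinite ν] (μ : Measure F) [μ.IsAddHaarMeasure]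
    {I : Set α} (hI : MeasurableSet I) {r : α → ℝ} (hr : Measurable r)
    (hr₀ : ∀ t ∈ I, 0 ≤ r t) :
    ν.prod μ {p | p.1 ∈ I ∧ p.2 ∈ closedBall 0 (r p.1)} =
      (∫⁻ t in I, ENNReal.ofReal (r t ^ Module.finrank ℝ F) ∂ν) * μ (closedBall 0 1) := by
  have hS : MeasurableSet {p : α × F | p.1 ∈ I ∧ p.2 ∈ closedBall 0 (r p.1)} :=
    (measurable_fst hI).inter
      (measurableSet_le (measurable_snd.dist measurable_const) (hr.comp measurable_fst))
  rw [Measure.prod_apply hS, ← lintegral_mul_const _ (hr.pow_const _).ennreal_ofReal,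
    ← lintegral_indicator hI]
  congr 1 with t
  by_cases ht : t ∈ I
  · have hslice : Prod.mk t ⁻¹' {p : α × F | p.1 ∈ I ∧ p.2 ∈ closedBall 0 (r p.1)} =
        closedBall 0 (r t) := by
      ext; simp [ht]
    rw [indicator_of_mem ht, hslice, Measure.addHaar_closedBall' μ _ (hr₀ t ht)]
  · simp [ht]

theorem integral_mul_sqrt_div_pow (m : ℕ) (R : ℝ) {h : ℝ} (hh : 0 < h) :
    ∫ s in (0 : ℝ)..h, (R * √(s / h)) ^ m = R ^ m * h / (m / 2 + 1) := by
  have hpow : EqOn (fun s => (R * √(s / h)) ^ m)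
      (fun s => (R / √h) ^ m * s ^ ((m : ℝ) / 2)) (uIcc 0 h) := by
    intro s hs
    rw [uIcc_of_le hh.le] at hs
    dsimp only
    rw [Real.rpow_div_two_eq_sqrt _ hs.1, Real.rpow_natCast, ← mul_pow, Real.sqrt_div' _ hh.le]
    ring
  have hm : (0 : ℝ) < m / 2 + 1 := by positivity
  have hsqrt : √h ≠ 0 := (Real.sqrt_pos.2 hh).ne'
  rw [intervalIntegral.integral_congr hpow, intervalIntegral.integral_const_mul,
    integral_rpow (Or.inl (by linarith)), Real.zero_rpow hm.ne', sub_zero,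
    Real.rpow_add hh, Real.rpow_one, Real.rpow_div_two_eq_sqrt _ hh.le, Real.rpow_natCast, div_pow]
  field_simp

theorem lintegral_Icc_mul_sqrt_div_pow (m : ℕ) {R : ℝ} (hR : 0 ≤ R) (c : ℝ) {h : ℝ}
    (hh : 0 < h) :
    ∫⁻ t in Icc (c - h) c, ENNReal.ofReal ((R * √((c - t) / h)) ^ m) =
      ENNReal.ofReal (R ^ m * h / (m / 2 + 1)) := by
  have hcont : Continuous fun t => (R * √((c - t) / h)) ^ m := by fun_prop
  rw [← ofReal_integral_eq_lintegral_ofReal hcont.integrableOn_Icc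
    (ae_of_all _ fun t => by positivity), integral_Icc_eq_integral_Ioc,
    ← intervalIntegral.integral_of_le (by linarith),
    intervalIntegral.integral_comp_sub_left (fun s => (R * √(s / h)) ^ m), sub_self,
    sub_sub_cancel, integral_mul_sqrt_div_pow m R hh]

section Paraboloid

variable {F : Type*} [NormedAddCommGroup F]

def solidParaboloid (c h R : ℝ) : Set (ℝ × F) :=
  {p | p.1 ∈ Icc (c - h) c ∧ p.2 ∈ closedBall 0 (R * √((c - p.1) / h))}

variable [NormedSpace ℝ F] [MeasurableSpace F] [BorelSpace F] [FiniteDimensional ℝ F]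

theorem measurableSet_solidParaboloid (c h R : ℝ) :
    MeasurableSet (solidParaboloid (F := F) c h R) :=
  (measurable_fst measurableSet_Icc).inter
    (measurableSet_le (measurable_snd.dist measurable_const) (by fun_prop))

theorem volume_prod_solidParaboloid (μ : Measure F) [μ.IsAddHaarMeasure] (c : ℝ) {h R : ℝ}
    (hh : 0 < h) (hR : 0 ≤ R) :
    volume.prod μ (solidParaboloid c h R) =
      ENNReal.ofReal (R ^ Module.finrank ℝ F * h / (Module.finrank ℝ F / 2 + 1)) *
        μ (closedBall 0 1) := by
  rw [solidParaboloid, Measure.prod_setOf_mem_closedBall _ μ measurableSet_Icc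
    (r := fun t => R * √((c - t) / h)) (by fun_prop) (fun _ _ => by positivity),
    lintegral_Icc_mul_sqrt_div_pow _ hR c hh]

end Paraboloid

section Cap

variable {E : Type*} [NormedAddCommGroup E] [InnerProductSpace ℝ E]

noncomputable def axialSplit (u : E) (ξ : E) : ℝ × (ℝ ∙ u)ᗮ :=
  (inner ℝ u ξ, (ℝ ∙ u)ᗮ.orthogonalProjectionOnto ξ)

theorem axialSplit_eq_comp {u : E} (hu : ‖u‖ = 1) :
    axialSplit u = Prod.map (LinearIsometryEquiv.toSpanUnitSingleton u hu).symm id ∘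
      WithLp.ofLp ∘ (ℝ ∙ u).orthogonalDecomposition := by
  ext ξ
  · simp only [axialSplit, Function.comp_apply, Prod.map_fst,
      Submodule.orthogonalDecomposition_apply, LinearIsometryEquiv.eq_symm_apply]
    ext1
    rw [LinearIsometryEquiv.toSpanUnitSingleton_apply,
      Submodule.coe_orthogonalProjectionOnto_apply, Submodule.starProjection_unit_singleton ℝ hu]
  · simp [axialSplit]

theorem norm_sq_eq_axialSplit {u : E} (hu : ‖u‖ = 1) (ξ : E) :
    ‖ξ‖ ^ 2 = (axialSplit u ξ).1 ^ 2 + ‖(axialSplit u ξ).2‖ ^ 2 := by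
  rw [Submodule.norm_sq_eq_add_norm_sq_projection ξ (ℝ ∙ u), axialSplit, ← Submodule.norm_coe,
    Submodule.coe_orthogonalProjectionOnto_apply, Submodule.starProjection_unit_singleton ℝ hu,
    norm_smul, hu, mul_one, Real.norm_eq_abs, sq_abs]

def unitBallCap (u : E) (ε : ℝ) : Set E :=
  closedBall 0 1 ∩ {ξ | 1 - ε ≤ inner ℝ u ξ}

theorem preimage_solidParaboloid_subset_unitBallCap {u : E} (hu : ‖u‖ = 1) {ε : ℝ}
    (hε : 0 < ε) (hε2 : ε ≤ 2) :
    axialSplit u ⁻¹' solidParaboloid 1 ε √(1 - (1 - ε) ^ 2) ⊆ unitBallCap u ε := by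
  rintro ξ ⟨⟨ht, ht1⟩, hy⟩
  refine ⟨?_, ht⟩
  set t := (axialSplit u ξ).1
  have hy2 : ‖(axialSplit u ξ).2‖ ^ 2 ≤ (2 - ε) * (1 - t) := by
    rw [mem_closedBall_zero_iff, ← Real.sqrt_mul (by nlinarith)] at hy
    calc ‖(axialSplit u ξ).2‖ ^ 2 ≤ (1 - (1 - ε) ^ 2) * ((1 - t) / ε) :=
          (Real.le_sqrt (norm_nonneg _)
            (mul_nonneg (by nlinarith) (div_nonneg (by linarith) hε.le))).1 hy
      _ = (2 - ε) * (1 - t) := by field_simp; ring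
  rw [mem_closedBall_zero_iff, ← sq_le_one_iff₀ (norm_nonneg ξ), norm_sq_eq_axialSplit hu]
  nlinarith

variable [FiniteDimensional ℝ E] [MeasurableSpace E] [BorelSpace E]

theorem measurePreserving_axialSplit {u : E} (hu : ‖u‖ = 1) :
    MeasurePreserving (axialSplit u) := by
  rw [axialSplit_eq_comp hu]
  exact ((LinearIsometryEquiv.measurePreserving _).prod (MeasurePreserving.id _)).comp
    ((WithLp.volume_preserving_ofLp _ _).comp (LinearIsometryEquiv.measurePreserving _))

theorem le_volume_unitBallCap {m : ℕ} (hm : Module.finrank ℝ E = m + 1) {u : E}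
    (hu : ‖u‖ = 1) {ε : ℝ} (hε : 0 < ε) (hε2 : ε ≤ 2) :
    ENNReal.ofReal (√(1 - (1 - ε) ^ 2) ^ m * ε * √Real.pi ^ m / Real.Gamma (m / 2 + 2)) ≤
      volume (unitBallCap u ε) := by
  have hdim : Module.finrank ℝ (ℝ ∙ u)ᗮ = m :=
    haveI := Fact.mk hm
    Submodule.finrank_orthogonal_span_singleton (norm_ne_zero_iff.1 (hu ▸ one_ne_zero))
  calc _ = volume (solidParaboloid 1 ε √(1 - (1 - ε) ^ 2) : Set (ℝ × (ℝ ∙ u)ᗮ)) := by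
        rw [Measure.volume_eq_prod, volume_prod_solidParaboloid _ _ hε (Real.sqrt_nonneg _),
          InnerProductSpace.volume_closedBall_zero_one, hdim,
          ← ENNReal.ofReal_mul (by positivity),
          show (m : ℝ) / 2 + 2 = m / 2 + 1 + 1 by ring, Real.Gamma_add_one (by positivity)]
        field_simp
    _ = volume (axialSplit u ⁻¹' solidParaboloid 1 ε √(1 - (1 - ε) ^ 2)) :=
        ((measurePreserving_axialSplit hu).measure_preimage
          (measurableSet_solidParaboloid _ _ _).nullMeasurableSet).symm
    _ ≤ volume (unitBallCap u ε) :=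
        measure_mono (preimage_solidParaboloid_subset_unitBallCap hu hε hε2)

end Cap

/-- Balls versus spherical caps: for the unit-ball cap `C_n(ε)` with base radius
`ρ(ε) = √(1-(1-ε)²)` and any `k > 0`,
`Vol(B_n(kρ(ε)))/Vol(C_n(ε)) < kⁿ · (2√π/ρ(ε)) · Γ(n/2+3/2)/Γ(n/2+1)`. -/
theorem ball_vs_cap_volume
    (n : ℕ) (hn : 1 ≤ n) (x : EuclideanSpace ℝ (Fin n)) (hx : x ≠ 0)
    (ε : ℝ) (hε : 0 < ε) (hε1 : ε < 1) (k : ℝ) (hk : 0 < k) :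
    volume (Metric.closedBall (0 : EuclideanSpace ℝ (Fin n))
        (k * Real.sqrt (1 - (1 - ε) ^ 2))) /
      volume (Metric.closedBall (0 : EuclideanSpace ℝ (Fin n)) 1 ∩
        {ξ | 1 - ε ≤ (inner ℝ (‖x‖⁻¹ • x) ξ : ℝ)}) <
    ENNReal.ofReal (k ^ n * (2 * Real.sqrt Real.pi / Real.sqrt (1 - (1 - ε) ^ 2)) *
        (Real.Gamma ((n : ℝ) / 2 + 3 / 2) / Real.Gamma ((n : ℝ) / 2 + 1))) := by
  obtain ⟨m, rfl⟩ := Nat.exists_eq_add_of_le' hn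
  have hcap := le_volume_unitBallCap finrank_euclideanSpace_fin (u := ‖x‖⁻¹ • x)
    (by simpa using norm_smul_inv_norm (𝕜 := ℝ) hx) hε (by linarith)
  have hΓ : Real.Gamma (((m + 1 : ℕ) : ℝ) / 2 + 3 / 2) = Real.Gamma (m / 2 + 2) := by
    congr 1; push_cast; ring
  set ρ := √(1 - (1 - ε) ^ 2)
  have hρ : 0 < ρ := Real.sqrt_pos.2 (by nlinarith)
  have hρ2 : ρ ^ 2 < 2 * ε := by rw [Real.sq_sqrt (by nlinarith)]; nlinarith
  rw [EuclideanSpace.volume_closedBall, Fintype.card_fin, ← ENNReal.ofReal_pow (by positivity),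
    ← ENNReal.ofReal_mul (by positivity)]
  refine (ENNReal.div_le_div_left hcap _).trans_lt ?_
  rw [← ENNReal.ofReal_div_of_pos (by positivity), ENNReal.ofReal_lt_ofReal_iff (by positivity),
    hΓ]
  calc _ = ρ ^ 2 / (2 * ε) * (k ^ (m + 1) * (2 * √Real.pi / ρ) *
        (Real.Gamma (m / 2 + 2) / Real.Gamma (((m + 1 : ℕ) : ℝ) / 2 + 1))) := by
        field_simp; ring
    _ < _ := mul_lt_of_lt_one_left (by positivity) ((div_lt_one (by positivity)).2 hρ2)
end

section
/- Let x_1, ..., x_N be i.i.d. random vectors uniformly distributed on the cube [-1,1]^n, so that R_0^2 = n/3. Fix 0 < ε < 1 and define h(x) = ⟨x/R_0, x_N/R_0⟩ - 1 + ε. Then P(h(x_N) ≥ 0 and h(x_i) < 0 for all i = 1,...,N-1) ≥ 1 - exp(-(2/9) n ε^2) - (N-1) exp(-(1/18) n (1-ε)^2). -/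
/-!
Both ways for the separation to fail are Hoeffding tail events for sums of `n` independent bounded
terms. `h(x_N) < 0` means that `∑ⱼ x_{N,j}²`, a sum of terms in `[0, 1]` with mean `1/3`, falls
`nε/3` below its mean, which has probability at most `exp(-2(nε/3)²/n)`. For `i < N`, `h(x_i) ≥ 0`
means that `∑ⱼ x_{i,j} x_{N,j}` exceeds `(1 - ε)n/3`; since `x_i` and `x_N` are independent, the
pairs `(x_{i,j}, x_{N,j})` are i.i.d. and the terms are centred and in `[-1, 1]`, giving
`exp(-((1 - ε)n/3)²/(2n))`. A union bound over the `M + 1` events concludes.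
-/

open MeasureTheory ProbabilityTheory Real Set
open scoped ENNReal

noncomputable def uniformNegOneOne : Measure ℝ := (2 : ℝ≥0∞)⁻¹ • volume.restrict (Icc (-1) 1)

instance : IsProbabilityMeasure uniformNegOneOne := by
  constructor
  simp [uniformNegOneOne, Real.volume_Icc, one_add_one_eq_two,
    ENNReal.inv_mul_cancel two_ne_zero ENNReal.ofNat_ne_top]

lemma ae_mem_Icc_uniformNegOneOne : ∀ᵐ u ∂uniformNegOneOne, u ∈ Icc (-1 : ℝ) 1 :=
  Measure.ae_smul_measure (ae_restrict_mem measurableSet_Icc) _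

lemma integral_uniformNegOneOne (f : ℝ → ℝ) :
    ∫ u, f u ∂uniformNegOneOne = (∫ u in (-1 : ℝ)..1, f u) / 2 := by
  rw [uniformNegOneOne, integral_smul_measure, intervalIntegral.integral_of_le (by norm_num),
    ← integral_Icc_eq_integral_Ioc]
  simp [div_eq_inv_mul]

lemma integral_id_uniformNegOneOne : ∫ u, u ∂uniformNegOneOne = 0 := by
  simp [integral_uniformNegOneOne]

lemma integral_mul_self_uniformNegOneOne : ∫ u, u * u ∂uniformNegOneOne = 1 / 3 := by
  simp_rw [integral_uniformNegOneOne, ← sq, integral_pow]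
  norm_num

theorem measureReal_pi_sum_sub_integral_ge_le {ι α : Type*} [Fintype ι] [MeasurableSpace α]
    {μ : Measure α} [IsProbabilityMeasure μ] {f : α → ℝ} (hf : Measurable f) {a b : ℝ}
    (hfab : ∀ᵐ x ∂μ, f x ∈ Icc a b) {t : ℝ} (ht : 0 ≤ t) :
    (Measure.pi fun _ : ι => μ).real {v | t ≤ ∑ i, (f (v i) - μ[f])} ≤
      exp (-2 * t ^ 2 / (Fintype.card ι * (b - a) ^ 2)) := by
  have hindep : iIndepFun (fun i v => f (v i) - μ[f]) (Measure.pi fun _ : ι => μ) :=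
    iIndepFun_pi (X := fun _ x => f x - μ[f]) fun _ => (hf.sub_const _).aemeasurable
  have hsubG (i : ι) : HasSubgaussianMGF (fun v => f (v i) - μ[f]) ((‖b - a‖₊ / 2) ^ 2)
      (Measure.pi fun _ : ι => μ) := by
    have h : HasSubgaussianMGF (fun x => f x - μ[f]) ((‖b - a‖₊ / 2) ^ 2)
        ((Measure.pi fun _ : ι => μ).map (fun v => v i)) := by
      rw [(measurePreserving_eval (fun _ : ι => μ) i).map_eq]
      exact hasSubgaussianMGF_of_mem_Icc hf.aemeasurable hfab
    exact h.of_map (measurable_pi_apply i : Measurable fun v : ι → α => v i).aemeasurable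
  calc _ ≤ _ := HasSubgaussianMGF.measure_sum_ge_le_of_iIndepFun hindep (fun i _ => hsubG i) ht
    _ = _ := by
      congr 1
      rw [Finset.sum_const, Finset.card_univ]
      push_cast
      rw [nsmul_eq_mul, div_pow, Real.norm_eq_abs, sq_abs,
        show (2 : ℝ) * (Fintype.card ι * ((b - a) ^ 2 / 2 ^ 2)) = Fintype.card ι * (b - a) ^ 2 / 2
          by ring, div_div_eq_mul_div]
      ring

theorem one_sub_le_measureReal_of_compl_subset {Ω ι : Type*} [MeasurableSpace Ω] [Fintype ι]
    {P : Measure Ω} [IsProbabilityMeasure P] {A B : Set Ω} {E : ι → Set Ω}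
    (h : Aᶜ ⊆ B ∪ ⋃ i, E i) :
    1 - P.real B - ∑ i, P.real (E i) ≤ P.real A := by
  have hunion : 1 ≤ P.real A + P.real Aᶜ := by
    simpa using measureReal_union_le (μ := P) A Aᶜ
  have hcompl : P.real Aᶜ ≤ P.real B + ∑ i, P.real (E i) :=
    (measureReal_mono h).trans <| (measureReal_union_le _ _).trans <|
      add_le_add_right (measureReal_iUnion_fintype_le E) _
  linarith

namespace ProbabilityTheory

variable {Ω ι : Type*} [MeasurableSpace Ω] [Fintype ι] {P : Measure Ω} {μ ν : Measure ℝ}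
  [IsProbabilityMeasure μ] [IsProbabilityMeasure ν]

theorem HasLaw.measureReal_sum_mul_self_le_le {X : Ω → ι → ℝ}
    (hX : HasLaw X (Measure.pi fun _ => μ) P) (hμ : ∀ᵐ u ∂μ, u ∈ Icc (-1 : ℝ) 1) {t : ℝ}
    (ht : 0 ≤ t) :
    P.real {ω | ∑ i, X ω i * X ω i ≤ Fintype.card ι * ∫ u, u * u ∂μ - t} ≤
      exp (-2 * t ^ 2 / Fintype.card ι) := by
  rw [hX.measureReal_eq (p := fun v => ∑ i, v i * v i ≤ Fintype.card ι * ∫ u, u * u ∂μ - t)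
    (measurableSet_le (by fun_prop) measurable_const)]
  have hbound : ∀ᵐ u ∂μ, -(u * u) ∈ Icc (-1 : ℝ) 0 := by
    filter_upwards [hμ] with u ⟨hu₁, hu₂⟩
    constructor <;> nlinarith
  calc _ ≤ (Measure.pi fun _ => μ).real {v | t ≤ ∑ i, (-(v i * v i) - ∫ u, -(u * u) ∂μ)} := by
        refine measureReal_mono fun v hv => ?_
        simp only [mem_ofPred_eq, integral_neg, Finset.sum_sub_distrib, Finset.sum_neg_distrib,
          Finset.sum_const, Finset.card_univ, nsmul_eq_mul] at hv ⊢
        linarith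
    _ ≤ _ := measureReal_pi_sum_sub_integral_ge_le (by fun_prop) hbound ht
    _ = _ := by norm_num

theorem IndepFun.measureReal_sum_mul_ge_le [IsProbabilityMeasure P] {X Y : Ω → ι → ℝ}
    (hXY : IndepFun X Y P) (hX : HasLaw X (Measure.pi fun _ => μ) P)
    (hY : HasLaw Y (Measure.pi fun _ => ν) P) (hμ : ∀ᵐ u ∂μ, u ∈ Icc (-1 : ℝ) 1)
    (hν : ∀ᵐ u ∂ν, u ∈ Icc (-1 : ℝ) 1) (hν₀ : ∫ u, u ∂ν = 0) {t : ℝ} (ht : 0 ≤ t) :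
    P.real {ω | t ≤ ∑ i, X ω i * Y ω i} ≤ exp (-t ^ 2 / (2 * Fintype.card ι)) := by
  have hlaw : HasLaw (fun ω i => (X ω i, Y ω i)) (Measure.pi fun _ => μ.prod ν) P :=
    (measurePreserving_arrowProdEquivProdArrow ℝ ℝ ι _ _).symm.comp_hasLaw
      ((indepFun_iff_hasLaw_prodMk_prod hX hY).1 hXY)
  rw [hlaw.measureReal_eq (p := fun w => t ≤ ∑ i, (w i).1 * (w i).2)
    (measurableSet_le measurable_const (by fun_prop))]
  have hbound : ∀ᵐ p ∂μ.prod ν, p.1 * p.2 ∈ Icc (-1 : ℝ) 1 := by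
    filter_upwards [Measure.quasiMeasurePreserving_fst.ae hμ,
      Measure.quasiMeasurePreserving_snd.ae hν] with p ⟨h₁, h₂⟩ ⟨h₃, h₄⟩
    constructor <;> nlinarith
  have hmean : ∫ p, p.1 * p.2 ∂μ.prod ν = 0 := by
    rw [integral_prod_mul (fun u => u) (fun u => u), hν₀, mul_zero]
  have h := measureReal_pi_sum_sub_integral_ge_le (ι := ι) (by fun_prop) hbound ht
  simp only [hmean, sub_zero] at h
  convert h using 2
  ring

end ProbabilityTheory

lemma div_sub_one_add_nonneg_iff {s c ε : ℝ} (hc : 0 < c) :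
    0 ≤ s / c - 1 + ε ↔ (1 - ε) * c ≤ s := by
  rw [sub_add, sub_nonneg, le_div_iff₀ hc]

lemma div_sub_one_add_neg_iff {s c ε : ℝ} (hc : 0 < c) :
    s / c - 1 + ε < 0 ↔ s < (1 - ε) * c := by
  rw [← not_le, div_sub_one_add_nonneg_iff hc, not_le]

/-- Specialization of 1-element stochastic separation to i.i.d. vectors uniform on
the cube `[-1,1]ⁿ` (so `R₀² = n/3`): with `h(v) = ⟨v/R₀, x_N/R₀⟩ - 1 + ε`,
`P(h(x_N) ≥ 0 ∧ h(x_i) < 0 ∀ i < N) ≥ 1 - exp(-(2/9)nε²) - (N-1)exp(-(1/18)n(1-ε)²)`.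
Here the `N = M + 1` vectors are `x 0, …, x M` and `x_N = x (Fin.last M)`. -/
theorem one_element_separation_uniform_cube
    {Ω : Type*} [MeasurableSpace Ω] (P : Measure Ω) [IsProbabilityMeasure P]
    (n M : ℕ) (hn : 0 < n) (x : Fin (M + 1) → Ω → (Fin n → ℝ))
    (hmeas : ∀ i, Measurable (x i))
    (hindep : iIndepFun x P)
    (hunif : ∀ i, Measure.map (x i) P =
      Measure.pi fun _ : Fin n => (2 : ENNReal)⁻¹ • volume.restrict (Set.Icc (-1 : ℝ) 1))
    (ε : ℝ) (hε : 0 < ε) (hε1 : ε < 1) :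
    1 - Real.exp (-(2 / 9 * n * ε ^ 2))
      - M * Real.exp (-(1 / 18 * n * (1 - ε) ^ 2)) ≤
    (P {ω |
        0 ≤ (∑ j, x (Fin.last M) ω j * x (Fin.last M) ω j) / ((n : ℝ) / 3) - 1 + ε ∧
        ∀ i : Fin M,
          (∑ j, x i.castSucc ω j * x (Fin.last M) ω j) / ((n : ℝ) / 3) - 1 + ε < 0}).toReal := by
  have hlaw (i : Fin (M + 1)) : HasLaw (x i) (Measure.pi fun _ => uniformNegOneOne) P :=
    ⟨(hmeas i).aemeasurable, hunif i⟩
  have hn_pos : (0 : ℝ) < n := Nat.cast_pos.2 hn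
  have hnorm := (hlaw (Fin.last M)).measureReal_sum_mul_self_le_le ae_mem_Icc_uniformNegOneOne
    (t := n * ε / 3) (by positivity)
  have hinner (i : Fin M) := (hindep.indepFun (Fin.castSucc_lt_last i).ne).measureReal_sum_mul_ge_le
    (hlaw _) (hlaw _) ae_mem_Icc_uniformNegOneOne ae_mem_Icc_uniformNegOneOne
    integral_id_uniformNegOneOne (t := (1 - ε) * (n / 3)) (by nlinarith)
  simp only [Fintype.card_fin, integral_mul_self_uniformNegOneOne] at hnorm hinner
  rw [show (n : ℝ) * (1 / 3) - n * ε / 3 = (1 - ε) * (n / 3) by ring,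
    show -2 * (n * ε / 3) ^ 2 / n = -(2 / 9 * n * ε ^ 2) by field_simp; ring] at hnorm
  rw [show -((1 - ε) * (n / 3)) ^ 2 / (2 * n) = -(1 / 18 * n * (1 - ε) ^ 2) by
    field_simp; ring] at hinner
  have hsum := Finset.sum_le_card_nsmul Finset.univ _ _ fun i _ => hinner i
  rw [Finset.card_univ, Fintype.card_fin, nsmul_eq_mul] at hsum
  simp only [div_sub_one_add_nonneg_iff (by positivity : (0 : ℝ) < n / 3),
    div_sub_one_add_neg_iff (by positivity : (0 : ℝ) < n / 3)]
  refine le_trans (by linarith) (one_sub_le_measureReal_of_compl_subset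
    (B := {ω | ∑ j, x (Fin.last M) ω j * x (Fin.last M) ω j ≤ (1 - ε) * (n / 3)})
    (E := fun i : Fin M => {ω | (1 - ε) * (n / 3) ≤ ∑ j, x i.castSucc ω j * x (Fin.last M) ω j})
    fun ω hω => ?_)
  simp only [mem_compl_iff, mem_ofPred_eq, not_and_or, not_le, not_forall, not_lt] at hω
  rcases hω with hω | ⟨i, hi⟩
  · exact Or.inl hω.le
  · exact Or.inr <| mem_iUnion.2 ⟨i, hi⟩
end
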